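/- arXiv:1905.03270 — 2 statements merged into one kernel-verified Lean document; each statement's English description precedes it below -/
import Mathlib

section
/- If G is a subgroup of GL(d,ℂ) and L ∈ G, then the smallest eigenvalue of L L† satisfies λ_min(L L†) ≥ (1/d) · inf over Y ∈ G of tr(Y† Y L L†) / tr(Y† Y). -/
open Matrix MeasureTheory ProbabilityTheory Filter Topology

noncomputable instance matMS {d : ℕ} : MeasurableSpace (Matrix (Fin d) (Fin d) ℂ) :=
  inferInstanceAs (MeasurableSpace (Fin d → Fin d → ℂ))

/-- largest eigenvalue of `L * Lᴴ` -/
noncomputable def lamMax {d : ℕ} (L : Matrix (Fin d) (Fin d) ℂ) : ℝ :=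
  ⨆ i, (Matrix.isHermitian_mul_conjTranspose_self L).eigenvalues i

/-- smallest eigenvalue of `L * Lᴴ` -/
noncomputable def lamMin {d : ℕ} (L : Matrix (Fin d) (Fin d) ℂ) : ℝ :=
  ⨅ i, (Matrix.isHermitian_mul_conjTranspose_self L).eigenvalues i

/-- largest singular value of `L`: square root of the largest eigenvalue of `Lᴴ * L` -/
noncomputable def sigmaMax {d : ℕ} (L : Matrix (Fin d) (Fin d) ℂ) : ℝ :=
  Real.sqrt (⨆ i, (Matrix.isHermitian_conjTranspose_mul_self L).eigenvalues i)

/-- smallest singular value of `L` -/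
noncomputable def sigmaMin {d : ℕ} (L : Matrix (Fin d) (Fin d) ℂ) : ℝ :=
  Real.sqrt (⨅ i, (Matrix.isHermitian_conjTranspose_mul_self L).eigenvalues i)

/-- normalized Gram matrix `Yᴴ Y / tr (Yᴴ Y)` (equal to `0` when the trace vanishes) -/
noncomputable def gram {d : ℕ} (Y : Matrix (Fin d) (Fin d) ℂ) : Matrix (Fin d) (Fin d) ℂ :=
  ((Yᴴ * Y).trace)⁻¹ • (Yᴴ * Y)

/-!
Test the infimum at `Y = L⁻¹`, which lies in `G`. With `A = L Lᴴ` positive definite,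
`Yᴴ Y = A⁻¹`, so the quotient equals `tr (A⁻¹ A) / tr A⁻¹ = d / ∑ᵢ μᵢ⁻¹` over the eigenvalues
`μᵢ` of `A`, and `∑ᵢ μᵢ⁻¹ ≥ (min μ)⁻¹`.
-/

open scoped ComplexOrder

namespace Matrix

variable {𝕜 n : Type*} [RCLike 𝕜] [Fintype n] {A : Matrix n n 𝕜}

lemma PosSemidef.re_trace_conjTranspose_mul_self_mul_nonneg (hA : A.PosSemidef)
    (Y : Matrix n n 𝕜) : 0 ≤ RCLike.re (Yᴴ * Y * A).trace := by
  rw [mul_assoc, trace_mul_comm]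
  exact (RCLike.nonneg_iff.mp (hA.mul_mul_conjTranspose_same Y).trace_nonneg).1

lemma PosSemidef.bddBelow_range_re_trace_div {ι : Type*} (hA : A.PosSemidef)
    (Y : ι → Matrix n n 𝕜) :
    BddBelow (Set.range fun i => RCLike.re ((Y i)ᴴ * Y i * A).trace /
      RCLike.re ((Y i)ᴴ * Y i).trace) := by
  classical
  refine ⟨0, Set.forall_mem_range.mpr fun i => div_nonneg ?_ ?_⟩
  · exact hA.re_trace_conjTranspose_mul_self_mul_nonneg (Y i)
  · simpa using PosSemidef.one.re_trace_conjTranspose_mul_self_mul_nonneg (Y i)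

variable [DecidableEq n]

lemma IsHermitian.trace_cfc (hA : A.IsHermitian) (f : ℝ → ℝ) :
    (cfc f A).trace = ∑ i, (f (hA.eigenvalues i) : 𝕜) := by
  rw [hA.cfc_eq, IsHermitian.cfc, Unitary.conjStarAlgAut_apply, trace_mul_cycle,
    Unitary.coe_star_mul_self, one_mul, trace_diagonal]
  rfl

lemma PosDef.trace_inv (hA : A.PosDef) :
    A⁻¹.trace = ∑ i, (((hA.isHermitian.eigenvalues i)⁻¹ : ℝ) : 𝕜) := by
  rw [nonsing_inv_eq_ringInverse,
    ← cfc_ringInverse_id (R := ℝ) A hA.isUnit hA.isHermitian.isSelfAdjoint,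
    hA.isHermitian.trace_cfc]

lemma PosDef.inv_re_trace_inv_le_iInf_eigenvalues (hA : A.PosDef) :
    (RCLike.re A⁻¹.trace)⁻¹ ≤ ⨅ i, hA.isHermitian.eigenvalues i := by
  cases isEmpty_or_nonempty n
  · simp
  obtain ⟨i₀, hi₀⟩ := exists_eq_ciInf_of_finite (f := hA.isHermitian.eigenvalues)
  have hpos := hA.eigenvalues_pos
  rw [← hi₀, hA.trace_inv, map_sum]
  simp only [RCLike.ofReal_re]
  exact inv_le_of_inv_le₀ (hpos i₀)
    (Finset.single_le_sum (fun i _ => (inv_pos.mpr (hpos i)).le) (Finset.mem_univ i₀))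

lemma posDef_mul_conjTranspose_self_of_isUnit {L : Matrix n n 𝕜} (hL : IsUnit L) :
    (L * Lᴴ).PosDef :=
  .mul_conjTranspose_self L (vecMul_injective_iff_isUnit.mpr hL)

lemma conjTranspose_inv_mul_inv (L : Matrix n n 𝕜) : L⁻¹ᴴ * L⁻¹ = (L * Lᴴ)⁻¹ := by
  rw [conjTranspose_nonsing_inv, mul_inv_rev]

end Matrix

theorem stmt_2 {d : ℕ} (G : Subgroup (GL (Fin d) ℂ)) (L : GL (Fin d) ℂ) (hL : L ∈ G) :
    lamMin (L : Matrix (Fin d) (Fin d) ℂ) ≥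
      (1 / (d : ℝ)) * ⨅ Y : G, ((((Y : GL (Fin d) ℂ) : Matrix (Fin d) (Fin d) ℂ)ᴴ *
          ((Y : GL (Fin d) ℂ) : Matrix (Fin d) (Fin d) ℂ) *
          ((L : Matrix (Fin d) (Fin d) ℂ) * (L : Matrix (Fin d) (Fin d) ℂ)ᴴ)).trace).re /
        ((((Y : GL (Fin d) ℂ) : Matrix (Fin d) (Fin d) ℂ)ᴴ *
          ((Y : GL (Fin d) ℂ) : Matrix (Fin d) (Fin d) ℂ)).trace).re := by
  rcases Nat.eq_zero_or_pos d with rfl | hd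
  · simp [lamMin]
  set A := (L : Matrix (Fin d) (Fin d) ℂ) * (L : Matrix (Fin d) (Fin d) ℂ)ᴴ
  have hA : A.PosDef := posDef_mul_conjTranspose_self_of_isUnit L.isUnit
  have hbdd := hA.posSemidef.bddBelow_range_re_trace_div
    fun Y : G => ((Y : GL (Fin d) ℂ) : Matrix (Fin d) (Fin d) ℂ)
  have hgram : (((L⁻¹ : GL (Fin d) ℂ) : Matrix (Fin d) (Fin d) ℂ))ᴴ *
      ((L⁻¹ : GL (Fin d) ℂ) : Matrix (Fin d) (Fin d) ℂ) = A⁻¹ := by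
    rw [coe_units_inv, conjTranspose_inv_mul_inv]
  calc (1 / (d : ℝ)) * ⨅ Y : G, _
      ≤ (1 / (d : ℝ)) * ((A⁻¹ * A).trace.re / (A⁻¹.trace).re) := by
        gcongr
        refine (ciInf_le hbdd ⟨L⁻¹, G.inv_mem hL⟩).trans_eq ?_
        simp only [hgram]
        rfl
    _ = (A⁻¹.trace.re)⁻¹ := by
        rw [nonsing_inv_mul A ((isUnit_iff_isUnit_det A).mp hA.isUnit), trace_one,
          Fintype.card_fin, Complex.natCast_re]
        field_simp
    _ ≤ lamMin (L : Matrix (Fin d) (Fin d) ℂ) := hA.inv_re_trace_inv_le_iInf_eigenvalues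
end

section
/- Let (Lᵢ) be i.i.d. uniform over the two matrices A = [[1,0],[0,0]] and B = (1/2)[[1,1],[1,1]]. Then the maximal Lyapunov exponent is γ₁ = −(1/4) log 2, i.e., lim_{n→∞} (1/n) E[log σ_max(L₁⋯Lₙ)] = −(1/4) log 2. -/
open Matrix MeasureTheory ProbabilityTheory Filter Topology

noncomputable instance matMSR {d : ℕ} : MeasurableSpace (Matrix (Fin d) (Fin d) ℝ) :=
  inferInstanceAs (MeasurableSpace (Fin d → Fin d → ℝ))

/-- largest singular value of a real matrix -/
noncomputable def sigmaMaxR {d : ℕ} (L : Matrix (Fin d) (Fin d) ℝ) : ℝ :=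
  Real.sqrt (⨆ i, (Matrix.isHermitian_conjTranspose_mul_self L).eigenvalues i)

/-!
Both matrices are rank-one projectors `v vᵀ`, onto `e₁` and onto `(e₁ + e₂)/√2`. A product of
rank-one projectors telescopes, `P_{v₀} ⋯ P_{vₙ} = (∏ ⟨vᵢ, vᵢ₊₁⟩) • v₀ vₙᵀ`, and its largest
singular value is the scalar `∏ ⟨vᵢ, vᵢ₊₁⟩`. Since `⟨vᵢ, vᵢ₊₁⟩` is `1` or `1/√2`, the logarithm
of `σ_max(L₁ ⋯ Lₙ)` is `-(log 2)/2` times the number of switches between consecutive factors.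
By independence each of the `n - 1` consecutive pairs switches with probability `1/2`, so
`E log σ_max(L₁ ⋯ Lₙ) = -(n - 1) (log 2)/4`.
-/

namespace Matrix

variable {n R : Type*} [Fintype n] [DecidableEq n] [CommSemiring R]

theorem prod_ofFn_vecMulVec (u v : ℕ → n → R) (k : ℕ) :
    (List.ofFn fun i : Fin (k + 1) => vecMulVec (u i) (v i)).prod =
      (∏ i ∈ Finset.range k, v i ⬝ᵥ u (i + 1)) • vecMulVec (u 0) (v k) := by
  induction k with
  | zero => simp
  | succ k ih =>
    rw [List.ofFn_succ', List.prod_concat]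
    simp only [Fin.val_castSucc, Fin.val_last, ih]
    rw [smul_mul_assoc, vecMulVec_mul_vecMulVec, vecMulVec_smul, smul_smul,
      Finset.prod_range_succ]

theorem IsHermitian.iSup_eigenvalues_eq_trace {A : Matrix (Fin 2) (Fin 2) ℝ}
    (hA : A.IsHermitian) (htr : 0 ≤ A.trace) (hdet : A.det = 0) :
    ⨆ i, hA.eigenvalues i = A.trace := by
  have hsum : hA.eigenvalues 0 + hA.eigenvalues 1 = A.trace := by
    simp [hA.trace_eq_sum_eigenvalues, Fin.sum_univ_two]
  have hprod : hA.eigenvalues 0 * hA.eigenvalues 1 = 0 := by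
    simpa [Fin.prod_univ_two, hdet] using hA.det_eq_prod_eigenvalues.symm
  have hbdd := Set.finite_range hA.eigenvalues |>.bddAbove
  rcases mul_eq_zero.1 hprod with h | h
  · refine le_antisymm (ciSup_le (Fin.forall_fin_two.2 ⟨?_, ?_⟩)) (le_ciSup_of_le hbdd 1 ?_) <;>
      linarith
  · refine le_antisymm (ciSup_le (Fin.forall_fin_two.2 ⟨?_, ?_⟩)) (le_ciSup_of_le hbdd 0 ?_) <;>
      linarith

end Matrix

theorem sigmaMaxR_vecMulVec (a b : Fin 2 → ℝ) :
    sigmaMaxR (vecMulVec a b) = √((a ⬝ᵥ a) * (b ⬝ᵥ b)) := by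
  have hgram : (vecMulVec a b)ᴴ * vecMulVec a b = (a ⬝ᵥ a) • vecMulVec b b := by
    rw [conjTranspose_vecMulVec, vecMulVec_mul_vecMulVec, vecMulVec_smul]
    simp
  have htr : ((vecMulVec a b)ᴴ * vecMulVec a b).trace = (a ⬝ᵥ a) * (b ⬝ᵥ b) := by
    rw [hgram, trace_smul, trace_vecMulVec, smul_eq_mul]
  have hdet : ((vecMulVec a b)ᴴ * vecMulVec a b).det = 0 := by
    rw [hgram, det_smul, det_vecMulVec, mul_zero]
  have htr_nonneg : 0 ≤ ((vecMulVec a b)ᴴ * vecMulVec a b).trace :=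
    htr ▸ mul_nonneg (dotProduct_self_star_nonneg a) (dotProduct_self_star_nonneg b)
  rw [sigmaMaxR, IsHermitian.iSup_eigenvalues_eq_trace _ htr_nonneg hdet, htr]

noncomputable def projDir : Bool → Fin 2 → ℝ
  | false => ![1, 0]
  | true => ![(√2)⁻¹, (√2)⁻¹]

noncomputable def proj (b : Bool) : Matrix (Fin 2) (Fin 2) ℝ :=
  vecMulVec (projDir b) (projDir b)

lemma inv_sqrt_two_mul_self : (√2)⁻¹ * (√2)⁻¹ = (2⁻¹ : ℝ) := by
  rw [← mul_inv, Real.mul_self_sqrt zero_le_two]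

lemma projDir_dotProduct (a b : Bool) :
    projDir a ⬝ᵥ projDir b = if a = b then 1 else (√2)⁻¹ := by
  cases a <;> cases b <;> norm_num [projDir, dotProduct, inv_sqrt_two_mul_self]

lemma proj_false : proj false = !![1, 0; 0, 0] := by
  ext i j; fin_cases i <;> fin_cases j <;> simp [proj, projDir, vecMulVec_apply]

lemma proj_true : proj true = (1 / 2 : ℝ) • !![1, 1; 1, 1] := by
  ext i j
  fin_cases i <;> fin_cases j <;> simp [proj, projDir, vecMulVec_apply, inv_sqrt_two_mul_self]

lemma proj_injective : Function.Injective proj := by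
  intro a b h
  have h11 := congrFun (congrFun h 1) 1
  cases a <;> cases b <;> simp_all [proj, projDir, vecMulVec_apply, inv_sqrt_two_mul_self]

open Classical in
noncomputable def switchCost {α : Type*} (x y : α) : ℝ :=
  if x = y then 0 else -(Real.log 2 / 2)

lemma switchCost_self {α : Type*} (x : α) : switchCost x x = 0 := if_pos rfl

lemma switchCost_of_ne {α : Type*} {x y : α} (h : x ≠ y) : switchCost x y = -(Real.log 2 / 2) :=
  if_neg h

lemma log_projDir_dotProduct (a b : Bool) :
    Real.log (projDir a ⬝ᵥ projDir b) = switchCost (proj a) (proj b) := by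
  rw [projDir_dotProduct, switchCost, proj_injective.eq_iff]
  split_ifs
  · exact Real.log_one
  · rw [Real.log_inv, Real.log_sqrt zero_le_two]

lemma log_sigmaMaxR_prod_proj (b : ℕ → Bool) (n : ℕ) :
    Real.log (sigmaMaxR (List.ofFn fun i : Fin (n + 1) => proj (b i)).prod) =
      ∑ i ∈ Finset.range n, switchCost (proj (b i)) (proj (b (i + 1))) := by
  have hpos : ∀ i, 0 < projDir (b i) ⬝ᵥ projDir (b (i + 1)) := fun i => by
    rw [projDir_dotProduct]; split_ifs <;> positivity
  have hunit : ∀ a, projDir a ⬝ᵥ projDir a = 1 := fun a => by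
    rw [projDir_dotProduct, if_pos rfl]
  set c := ∏ i ∈ Finset.range n, projDir (b i) ⬝ᵥ projDir (b (i + 1))
  have hc : 0 < c := Finset.prod_pos fun i _ => hpos i
  have hsigma : sigmaMaxR (c • vecMulVec (projDir (b 0)) (projDir (b n))) = c := by
    rw [← smul_vecMulVec, sigmaMaxR_vecMulVec, smul_dotProduct, dotProduct_smul, hunit, hunit]
    simp [Real.sqrt_mul_self hc.le]
  have hprod := prod_ofFn_vecMulVec (fun i => projDir (b i)) (fun i => projDir (b i)) n
  rw [show (List.ofFn fun i : Fin (n + 1) => proj (b i)).prod = _ from hprod, hsigma,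
    Real.log_prod fun i _ => (hpos i).ne']
  exact Finset.sum_congr rfl fun i _ => log_projDir_dotProduct _ _

instance {d : ℕ} : MeasurableSingletonClass (Matrix (Fin d) (Fin d) ℝ) :=
  inferInstanceAs (MeasurableSingletonClass (Fin d → Fin d → ℝ))

section FairCoin

open scoped ENNReal

variable {Ω α : Type*} [MeasurableSpace Ω] [MeasurableSpace α] {μ : Measure Ω} {X Y : Ω → α}
  {a b : α}

noncomputable def fairCoin (a b : α) : Measure α :=
  (1 / 2 : ℝ≥0∞) • Measure.dirac a + (1 / 2 : ℝ≥0∞) • Measure.dirac b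

lemma ae_eq_or_eq_of_map_eq_fairCoin [MeasurableSingletonClass α] (hX : AEMeasurable X μ)
    (hlaw : μ.map X = fairCoin a b) :
    ∀ᵐ ω ∂μ, X ω = a ∨ X ω = b := by
  refine ae_of_ae_map (p := fun x => x = a ∨ x = b) hX ?_
  rw [hlaw, fairCoin, ae_add_measure_iff]
  exact ⟨Measure.ae_smul_measure (by simp [ae_dirac_eq]) _,
    Measure.ae_smul_measure (by simp [ae_dirac_eq]) _⟩

lemma fairCoin_prod_fairCoin :
    (fairCoin a b).prod (fairCoin a b) = (1 / 4 : ℝ≥0∞) • (Measure.dirac (a, a) +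
      Measure.dirac (a, b) + Measure.dirac (b, a) + Measure.dirac (b, b)) := by
  simp only [fairCoin, Measure.prod_add, Measure.add_prod, Measure.prod_smul_left,
    Measure.prod_smul_right, Measure.dirac_prod_dirac, smul_smul, smul_add]
  have hquarter : (1 / 2 : ℝ≥0∞) * (1 / 2) = 1 / 4 := by
    norm_num [ENNReal.div_eq_inv_mul, ← ENNReal.mul_inv]
  rw [hquarter]
  abel

lemma ProbabilityTheory.IndepFun.integral_comp_of_map_eq_fairCoin [MeasurableSingletonClass α]
    [IsFiniteMeasure μ] (hX : AEMeasurable X μ) (hY : AEMeasurable Y μ) (hXY : IndepFun X Y μ)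
    (hXlaw : μ.map X = fairCoin a b) (hYlaw : μ.map Y = fairCoin a b) (g : α → α → ℝ) :
    Integrable (fun ω => g (X ω) (Y ω)) μ ∧
      ∫ ω, g (X ω) (Y ω) ∂μ = (g a a + g a b + g b a + g b b) / 4 := by
  have hlaw : μ.map (fun ω => (X ω, Y ω)) = (1 / 4 : ℝ≥0∞) • (Measure.dirac (a, a) +
      Measure.dirac (a, b) + Measure.dirac (b, a) + Measure.dirac (b, b)) := by
    rw [(indepFun_iff_map_prod_eq_prod_map_map hX hY).1 hXY, hXlaw, hYlaw, fairCoin_prod_fairCoin]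
  have hdirac : ∀ p, Integrable (Function.uncurry g) (Measure.dirac p) := fun p =>
    integrable_dirac enorm_lt_top
  have hg : Integrable (Function.uncurry g) (μ.map fun ω => (X ω, Y ω)) := by
    rw [hlaw]
    exact ((((hdirac _).add_measure (hdirac _)).add_measure (hdirac _)).add_measure
      (hdirac _)).smul_measure (by simp)
  refine ⟨(integrable_map_measure hg.aestronglyMeasurable (hX.prodMk hY)).1 hg, ?_⟩
  change ∫ ω, Function.uncurry g (X ω, Y ω) ∂μ = _
  rw [← integral_map (hX.prodMk hY) hg.aestronglyMeasurable, hlaw, integral_smul_measure,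
    integral_add_measure (((hdirac _).add_measure (hdirac _)).add_measure (hdirac _)) (hdirac _),
    integral_add_measure ((hdirac _).add_measure (hdirac _)) (hdirac _),
    integral_add_measure (hdirac _) (hdirac _)]
  simp [integral_dirac, div_eq_inv_mul]

end FairCoin

section RandomProducts

variable {Ω : Type*} [MeasurableSpace Ω] {μ : Measure Ω} {L : ℕ → Ω → Matrix (Fin 2) (Fin 2) ℝ}

lemma log_sigmaMaxR_prod_ae_eq_sum_switchCost (hmeas : ∀ i, Measurable (L i))
    (hlaw : ∀ i, μ.map (L i) = fairCoin (proj false) (proj true)) (n : ℕ) :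
    (fun ω => Real.log (sigmaMaxR (List.ofFn fun i : Fin (n + 1) => L i ω).prod)) =ᵐ[μ]
      fun ω => ∑ i ∈ Finset.range n, switchCost (L i ω) (L (i + 1) ω) := by
  have hae : ∀ᵐ ω ∂μ, ∀ i, ∃ b, L i ω = proj b := ae_all_iff.2 fun i =>
    (ae_eq_or_eq_of_map_eq_fairCoin (hmeas i).aemeasurable (hlaw i)).mono fun _ h =>
      h.elim (⟨false, ·⟩) (⟨true, ·⟩)
  filter_upwards [hae] with ω hω
  choose b hb using hω
  simp only [hb]
  exact log_sigmaMaxR_prod_proj b n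

lemma integral_log_sigmaMaxR_prod [IsFiniteMeasure μ] (hmeas : ∀ i, Measurable (L i))
    (hindep : iIndepFun L μ) (hlaw : ∀ i, μ.map (L i) = fairCoin (proj false) (proj true))
    (n : ℕ) :
    ∫ ω, Real.log (sigmaMaxR (List.ofFn fun i : Fin (n + 1) => L i ω).prod) ∂μ =
      n * (-(1 / 4) * Real.log 2) := by
  have hswitch (i : ℕ) :=
    (hindep.indepFun (Nat.succ_ne_self i).symm).integral_comp_of_map_eq_fairCoin
      (hmeas i).aemeasurable (hmeas (i + 1)).aemeasurable (hlaw i) (hlaw (i + 1)) switchCost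
  have hne := proj_injective.ne Bool.false_ne_true
  rw [integral_congr_ae (log_sigmaMaxR_prod_ae_eq_sum_switchCost hmeas hlaw n),
    integral_finsetSum _ fun i _ => (hswitch i).1]
  simp only [(hswitch _).2, switchCost_self, switchCost_of_ne hne, switchCost_of_ne hne.symm,
    Finset.sum_const, Finset.card_range, nsmul_eq_mul]
  ring

end RandomProducts

theorem stmt_16 {Ω : Type*} [MeasurableSpace Ω] (μ : Measure Ω) [IsProbabilityMeasure μ]
    (L : ℕ → Ω → Matrix (Fin 2) (Fin 2) ℝ)
    (hmeas : ∀ i, Measurable (L i))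
    (hindep : iIndepFun L μ)
    (hdist : ∀ i, Measure.map (L i) μ =
      (1 / 2 : ENNReal) • Measure.dirac (!![1, 0; 0, 0] : Matrix (Fin 2) (Fin 2) ℝ) +
      (1 / 2 : ENNReal) • Measure.dirac ((1 / 2 : ℝ) • !![1, 1; 1, 1] : Matrix (Fin 2) (Fin 2) ℝ)) :
    Tendsto (fun n : ℕ =>
        (1 / (n : ℝ)) * ∫ ω, Real.log (sigmaMaxR ((List.ofFn fun i : Fin n => L i ω).prod)) ∂μ)
      atTop (𝓝 (-(1 / 4) * Real.log 2)) := by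
  have hlaw (i : ℕ) : μ.map (L i) = fairCoin (proj false) (proj true) := by
    rw [hdist i, fairCoin, proj_false, proj_true]
  rw [← tendsto_add_atTop_iff_nat 1]
  have hlim := (tendsto_natCast_div_add_atTop (1 : ℝ)).mul_const (-(1 / 4) * Real.log 2)
  rw [one_mul] at hlim
  refine hlim.congr fun n => ?_
  rw [integral_log_sigmaMaxR_prod hmeas hindep hlaw n]
  push_cast
  field_simp
end
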